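/- For any two blocks w and v there exists a block u such that u represents the same element of G_BV as the concatenation w v; that is, the set of elements of G_BV represented by blocks is closed under multiplication. -/

import Mathlib

/-- Relator corresponding to the equation `u = v`. -/
def grel {α : Type*} (u v : FreeGroup α) : FreeGroup α := u * v⁻¹

/-- Generators of the braided Thompson group `BV`.  `s i` denotes `σ_{i+1}` and
`t i` denotes `τ_{i+1}` (so that exactly the generators `σ_i, τ_i` with `i ≥ 1` occur). -/
inductive BVGen : Type
  | x : ℕ → BVGen
  | s : ℕ → BVGen
  | t : ℕ → BVGen

namespace BVGen

/-- The free-group letter `x_i`. -/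
def X (i : ℕ) : FreeGroup BVGen := FreeGroup.of (BVGen.x i)

/-- The free-group letter `σ_i` (meaningful for `i ≥ 1`). -/
def S (i : ℕ) : FreeGroup BVGen := FreeGroup.of (BVGen.s (i - 1))

/-- The free-group letter `τ_i` (meaningful for `i ≥ 1`). -/
def T (i : ℕ) : FreeGroup BVGen := FreeGroup.of (BVGen.t (i - 1))

/-- The defining relations of the braided Thompson group `BV`. -/
def bvRels : Set (FreeGroup BVGen) :=
  { g |
    (∃ i j, i < j ∧ g = grel (X j * X i) (X i * X (j + 1))) ∨
    (∃ i j, 1 ≤ i ∧ i + 2 ≤ j ∧ g = grel (S i * S j) (S j * S i)) ∨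
    (∃ i, 1 ≤ i ∧ g = grel (S i * S (i + 1) * S i) (S (i + 1) * S i * S (i + 1))) ∨
    (∃ i j, 1 ≤ i ∧ i + 2 ≤ j ∧ g = grel (S i * T j) (T j * S i)) ∨
    (∃ i, 1 ≤ i ∧ g = grel (S i * T (i + 1) * S i) (T (i + 1) * S i * T (i + 1))) ∨
    (∃ i j, 1 ≤ i ∧ i < j ∧ g = grel (S i * X j) (X j * S i)) ∨
    (∃ i, 1 ≤ i ∧ g = grel (S i * X i) (X (i - 1) * S (i + 1) * S i)) ∨
    (∃ i j, j + 2 ≤ i ∧ g = grel (S i * X j) (X j * S (i + 1))) ∨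
    (∃ i, g = grel (S (i + 1) * X i) (X (i + 1) * S (i + 1) * S (i + 2))) ∨
    (∃ i j, j + 2 ≤ i ∧ g = grel (T i * X j) (X j * T (i + 1))) ∨
    (∃ i, 1 ≤ i ∧ g = grel (T i * X (i - 1)) (S i * T (i + 1))) ∨
    (∃ i, 1 ≤ i ∧ g = grel (T i) (X (i - 1) * T (i + 1) * S i)) }

end BVGen

/-- The braided Thompson group `BV`, given by its infinite presentation. -/
abbrev GBV : Type := PresentedGroup BVGen.bvRels

namespace GBV

/-- The generator `x_i` of `BV`. -/
def xg (i : ℕ) : GBV := PresentedGroup.of (BVGen.x i)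

/-- The generator `σ_i` of `BV` (meaningful for `i ≥ 1`). -/
def sg (i : ℕ) : GBV := PresentedGroup.of (BVGen.s (i - 1))

/-- The generator `τ_i` of `BV` (meaningful for `i ≥ 1`). -/
def tg (i : ℕ) : GBV := PresentedGroup.of (BVGen.t (i - 1))

/-- H_n: the subgroup of `BV` generated by the B_n generators
`σ_1, …, σ_{n-2}, τ_{n-1}`. -/
def Hn (n : ℕ) : Subgroup GBV :=
  Subgroup.closure ({g | ∃ i, 1 ≤ i ∧ i + 2 ≤ n ∧ g = sg i} ∪ {tg (n - 1)})

end GBV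

namespace GBV

/-- `N(u)` for a positive x-word given by its list of indices:
`N(empty) = 0`, `N(u x_j) = max (N u + 1) (j + 2)`. -/
def Nval (l : List ℕ) : ℕ := l.foldl (fun acc j => max (acc + 1) (j + 2)) 0

/-- The B_n generators, as letters: `σ_1, …, σ_{n-2}, τ_{n-1}`. -/
def BnGen (n : ℕ) : Set BVGen :=
  {g | (∃ i, 1 ≤ i ∧ i + 2 ≤ n ∧ g = BVGen.s (i - 1)) ∨ (2 ≤ n ∧ g = BVGen.t (n - 2))}

/-- A block `w₁ w₂ w₃⁻¹`: `w₁` and `w₃` are positive x-words with nondecreasing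
indices (i.e. of the form `x_{i₁}^{r₁} ⋯ x_{i_k}^{r_k}` with `i₁ < ⋯ < i_k`, `r_m ≥ 1`),
recorded as lists of indices, and `w₂` is a word in the B_n generators and their
inverses (letters with a sign) for some `n ≥ max (N w₁) (N w₃) + 1`. -/
structure Block where
  w1 : List ℕ
  w2 : List (BVGen × Bool)
  w3 : List ℕ
  n : ℕ
  h1 : w1.Chain' (· ≤ ·)
  h3 : w3.Chain' (· ≤ ·)
  h2 : ∀ p ∈ w2, p.1 ∈ BnGen n
  hbound : max (Nval w1) (Nval w3) + 1 ≤ n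

/-- Evaluation of a positive x-word in `BV`. -/
def evalX (l : List ℕ) : GBV := (l.map xg).prod

/-- Evaluation of a signed word in the generators in `BV`. -/
def evalW (l : List (BVGen × Bool)) : GBV :=
  (l.map (fun p => if p.2 then PresentedGroup.of p.1 else (PresentedGroup.of p.1)⁻¹)).prod

/-- The element of `BV` represented by a block. -/
def Block.eval (b : Block) : GBV := evalX b.w1 * evalW b.w2 * (evalX b.w3)⁻¹

end GBV

/-!
Write the blocks as `x_A c x_B⁻¹` and `x_C d x_D⁻¹`. The Ore property of the positive monoid
of Thompson's group `F` turns `x_B⁻¹ x_C` into `x_P x_Q⁻¹`, so it remains to move `x_P` to the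
left through `c` and `x_Q` to the left through `d⁻¹`. This is possible after raising the level:
an element of `H_n` lies in `H_{n+1}` or in `x_j H_{n+1}` for some `j ≤ n - 2`, and so does its
product with any `x_j`, `j ≤ n - 2`. This pair of properties is closed under products, so it
only has to be checked on the generators `σ_i^{±1}`, `τ_{n-1}^{±1}`, where each case is one of
the relations (C) and (D). The new `x`-letter keeps `N` of the left `x`-word below the new
level. Once both sides sit at a common level, the two `x`-words are sorted with relation (A),
which does not change `N`.
-/

theorem inv_mul_eq_mul_inv_of_mul_eq {G : Type*} [Group G] {a b x y : G} (h : a * x = y * b) :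
    a⁻¹ * y = x * b⁻¹ := by
  rw [inv_mul_eq_iff_eq_mul, ← mul_assoc, h, mul_inv_cancel_right]

namespace GBV
open BVGen

theorem xg_mul_xg_of_lt {i j : ℕ} (h : i < j) : xg j * xg i = xg i * xg (j + 1) :=
  PresentedGroup.mk_eq_mk_of_mul_inv_mem (x := X j * X i) (Or.inl ⟨i, j, h, rfl⟩)

theorem sg_mul_xg_of_lt {k j : ℕ} (h : k + 1 < j) : sg (k + 1) * xg j = xg j * sg (k + 1) :=
  PresentedGroup.mk_eq_mk_of_mul_inv_mem (x := S (k + 1) * X j) <| by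
    iterate 5 right
    exact .inl ⟨k + 1, j, le_add_self, h, rfl⟩

theorem sg_mul_xg_self (k : ℕ) : sg (k + 1) * xg (k + 1) = xg k * (sg (k + 2) * sg (k + 1)) := by
  rw [← mul_assoc]
  exact PresentedGroup.mk_eq_mk_of_mul_inv_mem (x := S (k + 1) * X (k + 1)) <| by
    iterate 6 right
    exact .inl ⟨k + 1, le_add_self, rfl⟩

theorem sg_mul_xg_of_add_two_le {k j : ℕ} (h : j + 2 ≤ k + 1) :
    sg (k + 1) * xg j = xg j * sg (k + 2) :=
  PresentedGroup.mk_eq_mk_of_mul_inv_mem (x := S (k + 1) * X j) <| by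
    iterate 7 right
    exact .inl ⟨k + 1, j, h, rfl⟩

theorem sg_succ_mul_xg (k : ℕ) : sg (k + 1) * xg k = xg (k + 1) * (sg (k + 1) * sg (k + 2)) := by
  rw [← mul_assoc]
  exact PresentedGroup.mk_eq_mk_of_mul_inv_mem (x := S (k + 1) * X k) <| by
    iterate 8 right
    exact .inl ⟨k, rfl⟩

theorem tg_mul_xg_of_add_two_le {k j : ℕ} (h : j + 2 ≤ k + 1) :
    tg (k + 1) * xg j = xg j * tg (k + 2) :=
  PresentedGroup.mk_eq_mk_of_mul_inv_mem (x := T (k + 1) * X j) <| by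
    iterate 9 right
    exact .inl ⟨k + 1, j, h, rfl⟩

theorem tg_succ_mul_xg (k : ℕ) : tg (k + 1) * xg k = sg (k + 1) * tg (k + 2) :=
  PresentedGroup.mk_eq_mk_of_mul_inv_mem (x := T (k + 1) * X k) <| by
    iterate 10 right
    exact .inl ⟨k + 1, le_add_self, rfl⟩

theorem tg_succ_eq (k : ℕ) : tg (k + 1) = xg k * (tg (k + 2) * sg (k + 1)) := by
  rw [← mul_assoc]
  exact PresentedGroup.mk_eq_mk_of_mul_inv_mem (x := T (k + 1)) <| by
    iterate 11 right
    exact ⟨k + 1, le_add_self, rfl⟩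

theorem sg_mem_Hn {i n : ℕ} (hi : 1 ≤ i) (hin : i + 2 ≤ n) : sg i ∈ Hn n :=
  Subgroup.subset_closure (Or.inl ⟨i, hi, hin, rfl⟩)

theorem tg_mem_Hn (k : ℕ) : tg (k + 1) ∈ Hn (k + 2) :=
  Subgroup.subset_closure (Or.inr rfl)

def raiseSet (n : ℕ) : Set GBV :=
  {g | ∃ h ∈ Hn (n + 1), g = h ∨ ∃ j, j + 2 ≤ n ∧ g = xg j * h}

section raiseSet

variable {n j : ℕ} {g h : GBV}

theorem mem_raiseSet_of_mem_Hn (hh : h ∈ Hn (n + 1)) : h ∈ raiseSet n :=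
  ⟨h, hh, .inl rfl⟩

theorem xg_mul_mem_raiseSet (hj : j + 2 ≤ n) (hh : h ∈ Hn (n + 1)) : xg j * h ∈ raiseSet n :=
  ⟨h, hh, .inr ⟨j, hj, rfl⟩⟩

theorem mul_mem_raiseSet (hg : g ∈ raiseSet n) (hh : h ∈ Hn (n + 1)) :
    g * h ∈ raiseSet n := by
  obtain ⟨g', hg', rfl | ⟨j, hj, rfl⟩⟩ := hg
  · exact mem_raiseSet_of_mem_Hn (mul_mem hg' hh)
  · rw [mul_assoc]
    exact xg_mul_mem_raiseSet hj (mul_mem hg' hh)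

end raiseSet

def Raisable (n : ℕ) (g : GBV) : Prop :=
  g ∈ raiseSet n ∧ ∀ j, j + 2 ≤ n → g * xg j ∈ raiseSet n

namespace Raisable

variable {n : ℕ} {g h d : GBV}

theorem mul_mem_raiseSet (hg : Raisable n g) (hd : d ∈ raiseSet n) : g * d ∈ raiseSet n := by
  obtain ⟨d, hd, rfl | ⟨j, hj, rfl⟩⟩ := hd
  · exact GBV.mul_mem_raiseSet hg.1 hd
  · rw [← mul_assoc]
    exact GBV.mul_mem_raiseSet (hg.2 j hj) hd

theorem mul (hg : Raisable n g) (hh : Raisable n h) : Raisable n (g * h) :=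
  ⟨hg.mul_mem_raiseSet hh.1, fun j hj => by
    rw [mul_assoc]
    exact hg.mul_mem_raiseSet (hh.2 j hj)⟩

end Raisable

theorem raisable_one (n : ℕ) : Raisable n 1 :=
  ⟨mem_raiseSet_of_mem_Hn (one_mem _), fun j hj => by
    simpa using xg_mul_mem_raiseSet hj (one_mem (Hn (n + 1)))⟩

theorem raisable_sg {k n : ℕ} (hk : k + 3 ≤ n) : Raisable n (sg (k + 1)) := by
  have h₁ : sg (k + 1) ∈ Hn (n + 1) := sg_mem_Hn le_add_self (by omega)
  have h₂ : sg (k + 2) ∈ Hn (n + 1) := sg_mem_Hn le_add_self (by omega)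
  refine ⟨mem_raiseSet_of_mem_Hn h₁, fun j hj => ?_⟩
  obtain h | rfl | rfl | h : k + 1 < j ∨ j = k + 1 ∨ k = j ∨ j + 2 ≤ k + 1 := by omega
  · rw [sg_mul_xg_of_lt h]
    exact xg_mul_mem_raiseSet hj h₁
  · rw [sg_mul_xg_self]
    exact xg_mul_mem_raiseSet (by omega) (mul_mem h₂ h₁)
  · rw [sg_succ_mul_xg]
    exact xg_mul_mem_raiseSet (by omega) (mul_mem h₁ h₂)
  · rw [sg_mul_xg_of_add_two_le h]
    exact xg_mul_mem_raiseSet hj h₂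

theorem raisable_sg_inv {k n : ℕ} (hk : k + 3 ≤ n) : Raisable n (sg (k + 1))⁻¹ := by
  have h₁ : sg (k + 1) ∈ Hn (n + 1) := sg_mem_Hn le_add_self (by omega)
  have h₂ : sg (k + 2) ∈ Hn (n + 1) := sg_mem_Hn le_add_self (by omega)
  refine ⟨mem_raiseSet_of_mem_Hn (inv_mem h₁), fun j hj => ?_⟩
  obtain h | rfl | rfl | h : k + 1 < j ∨ j = k + 1 ∨ k = j ∨ j + 2 ≤ k + 1 := by omega
  · rw [inv_mul_eq_mul_inv_of_mul_eq (sg_mul_xg_of_lt h)]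
    exact xg_mul_mem_raiseSet hj (inv_mem h₁)
  · rw [inv_mul_eq_mul_inv_of_mul_eq (sg_succ_mul_xg k)]
    exact xg_mul_mem_raiseSet (by omega) (inv_mem (mul_mem h₁ h₂))
  · rw [inv_mul_eq_mul_inv_of_mul_eq (sg_mul_xg_self k)]
    exact xg_mul_mem_raiseSet (by omega) (inv_mem (mul_mem h₂ h₁))
  · rw [inv_mul_eq_mul_inv_of_mul_eq (sg_mul_xg_of_add_two_le h)]
    exact xg_mul_mem_raiseSet hj (inv_mem h₂)

theorem raisable_tg (k : ℕ) : Raisable (k + 2) (tg (k + 1)) := by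
  have hσ : sg (k + 1) ∈ Hn (k + 3) := sg_mem_Hn le_add_self le_rfl
  have hτ : tg (k + 2) ∈ Hn (k + 3) := tg_mem_Hn (k + 1)
  refine ⟨?_, fun j hj => ?_⟩
  · rw [tg_succ_eq]
    exact xg_mul_mem_raiseSet le_rfl (mul_mem hτ hσ)
  obtain h | rfl : j + 2 ≤ k + 1 ∨ k = j := by omega
  · rw [tg_mul_xg_of_add_two_le h]
    exact xg_mul_mem_raiseSet hj hτ
  · rw [tg_succ_mul_xg]
    exact mem_raiseSet_of_mem_Hn (mul_mem hσ hτ)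

theorem raisable_tg_inv (k : ℕ) : Raisable (k + 2) (tg (k + 1))⁻¹ := by
  have hσ : sg (k + 1) ∈ Hn (k + 3) := sg_mem_Hn le_add_self le_rfl
  have hτ : tg (k + 2) ∈ Hn (k + 3) := tg_mem_Hn (k + 1)
  refine ⟨?_, fun j hj => ?_⟩
  · rw [show (tg (k + 1))⁻¹ = xg k * (sg (k + 1) * tg (k + 2))⁻¹ by
      rw [← tg_succ_mul_xg]; group]
    exact xg_mul_mem_raiseSet le_rfl (inv_mem (mul_mem hσ hτ))
  obtain h | rfl : j + 2 ≤ k + 1 ∨ k = j := by omega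
  · rw [inv_mul_eq_mul_inv_of_mul_eq (tg_mul_xg_of_add_two_le h)]
    exact xg_mul_mem_raiseSet hj (inv_mem hτ)
  · rw [show (tg (k + 1))⁻¹ * xg k = (tg (k + 2) * sg (k + 1))⁻¹ by rw [tg_succ_eq]; group]
    exact mem_raiseSet_of_mem_Hn (inv_mem (mul_mem hτ hσ))

theorem raisable_of_mem_Hn {k : ℕ} {g : GBV} (hg : g ∈ Hn (k + 2)) : Raisable (k + 2) g := by
  induction hg using Subgroup.closure_induction'' with
  | mem g hg =>
    rcases hg with ⟨i, hi, hik, rfl⟩ | rfl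
    · obtain ⟨i, rfl⟩ := Nat.exists_eq_add_of_le' hi
      exact raisable_sg hik
    · exact raisable_tg k
  | inv_mem g hg =>
    rcases hg with ⟨i, hi, hik, rfl⟩ | rfl
    · obtain ⟨i, rfl⟩ := Nat.exists_eq_add_of_le' hi
      exact raisable_sg_inv hik
    · exact raisable_tg_inv k
  | one => exact raisable_one _
  | mul g h _ _ hg hh => exact hg.mul hh

section Words

variable {j : ℕ} {l l₁ l₂ : List ℕ}

@[simp] theorem evalX_nil : evalX [] = 1 := rfl

@[simp] theorem evalX_cons : evalX (j :: l) = xg j * evalX l := List.prod_cons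

theorem evalX_append : evalX (l₁ ++ l₂) = evalX l₁ * evalX l₂ := by
  simp [evalX]

theorem evalW_append (w₁ w₂ : List (BVGen × Bool)) :
    evalW (w₁ ++ w₂) = evalW w₁ * evalW w₂ := by
  simp [evalW]

def NvalFrom (a : ℕ) (l : List ℕ) : ℕ := l.foldl (fun acc j => max (acc + 1) (j + 2)) a

theorem NvalFrom_cons (a : ℕ) : NvalFrom a (j :: l) = NvalFrom (max (a + 1) (j + 2)) l := rfl

theorem Nval_append_singleton : Nval (l ++ [j]) = max (Nval l + 1) (j + 2) := by
  simp [Nval]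

end Words

/-- Values of blocks with empty `w₃`, except that `w₁` need not be sorted. -/
def leftBlocks (n : ℕ) : Set GBV := {g | ∃ A, Nval A < n ∧ ∃ h ∈ Hn n, g = evalX A * h}

section leftBlocks

variable {n m j : ℕ} {g d : GBV} {A : List ℕ}

theorem evalX_mul_mem_leftBlocks_succ (hA : Nval A < n) (hd : d ∈ raiseSet n) :
    evalX A * d ∈ leftBlocks (n + 1) := by
  obtain ⟨h, hh, rfl | ⟨j, hj, rfl⟩⟩ := hd
  · exact ⟨A, by omega, _, hh, rfl⟩
  · refine ⟨A ++ [j], ?_, h, hh, ?_⟩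
    · rw [Nval_append_singleton]
      omega
    · simp [evalX_append, mul_assoc]

theorem leftBlocks_subset_succ (hn : 2 ≤ n) : leftBlocks n ⊆ leftBlocks (n + 1) := by
  obtain ⟨k, rfl⟩ := Nat.exists_eq_add_of_le' hn
  rintro _ ⟨A, hA, h, hh, rfl⟩
  exact evalX_mul_mem_leftBlocks_succ hA (raisable_of_mem_Hn hh).1

theorem mul_xg_mem_leftBlocks_succ (hn : 2 ≤ n) (hj : j + 2 ≤ n) (hg : g ∈ leftBlocks n) :
    g * xg j ∈ leftBlocks (n + 1) := by
  obtain ⟨k, rfl⟩ := Nat.exists_eq_add_of_le' hn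
  obtain ⟨A, hA, h, hh, rfl⟩ := hg
  rw [mul_assoc]
  exact evalX_mul_mem_leftBlocks_succ hA ((raisable_of_mem_Hn hh).2 j hj)

theorem leftBlocks_mono (hn : 2 ≤ n) (hnm : n ≤ m) : leftBlocks n ⊆ leftBlocks m := by
  induction m, hnm using Nat.le_induction with
  | base => exact subset_rfl
  | succ m hnm ih => exact ih.trans (leftBlocks_subset_succ (hn.trans hnm))

theorem exists_mul_evalX_mem_leftBlocks (hn : 2 ≤ n) (hg : g ∈ leftBlocks n) (P : List ℕ) :
    ∃ m, n ≤ m ∧ g * evalX P ∈ leftBlocks m := by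
  induction P generalizing g n with
  | nil => exact ⟨n, le_rfl, by simpa using hg⟩
  | cons j P ih =>
    have hn' : 2 ≤ max n (j + 2) := hn.trans (le_max_left _ _)
    obtain ⟨m, hm, hgm⟩ := ih (hn'.trans (Nat.le_succ _))
      (mul_xg_mem_leftBlocks_succ hn' (le_max_right _ _) (leftBlocks_mono hn (le_max_left _ _) hg))
    exact ⟨m, by omega, by rwa [evalX_cons, ← mul_assoc]⟩

end leftBlocks

theorem exists_inv_xg_mul_evalX (j : ℕ) (L : List ℕ) :
    ∃ P Q, (xg j)⁻¹ * evalX L = evalX P * (evalX Q)⁻¹ := by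
  induction L generalizing j with
  | nil => exact ⟨[], [j], by simp⟩
  | cons i L ih =>
    obtain h | rfl | h := lt_trichotomy i j
    · obtain ⟨P, Q, hPQ⟩ := ih (j + 1)
      refine ⟨i :: P, Q, ?_⟩
      rw [evalX_cons, ← mul_assoc, inv_mul_eq_mul_inv_of_mul_eq (xg_mul_xg_of_lt h), mul_assoc,
        hPQ, evalX_cons, mul_assoc]
    · exact ⟨L, [], by simp⟩
    · obtain ⟨P, Q, hPQ⟩ := ih j
      have hconj : (xg j)⁻¹ * xg i = xg (i + 1) * (xg j)⁻¹ := by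
        rw [eq_mul_inv_iff_mul_eq, mul_assoc, xg_mul_xg_of_lt h, inv_mul_cancel_left]
      refine ⟨(i + 1) :: P, Q, ?_⟩
      rw [evalX_cons, ← mul_assoc, hconj, mul_assoc, hPQ, evalX_cons, mul_assoc]

/-- Ore condition for the positive monoid of Thompson's group `F`. -/
theorem exists_inv_evalX_mul_evalX (R L : List ℕ) :
    ∃ P Q, (evalX R)⁻¹ * evalX L = evalX P * (evalX Q)⁻¹ := by
  induction R generalizing L with
  | nil => exact ⟨L, [], by simp⟩
  | cons r R ih =>
    obtain ⟨L', Q₁, h₁⟩ := exists_inv_xg_mul_evalX r L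
    obtain ⟨P, Q₂, h₂⟩ := ih L'
    refine ⟨P, Q₁ ++ Q₂, ?_⟩
    rw [evalX_cons, mul_inv_rev, mul_assoc, h₁, ← mul_assoc, h₂, evalX_append]
    group

def insertX (j : ℕ) : List ℕ → List ℕ
  | [] => [j]
  | i :: l => if j ≤ i then j :: i :: l else i :: insertX (j + 1) l

def sortX : List ℕ → List ℕ
  | [] => []
  | j :: l => insertX j (sortX l)

section Sorting

variable {j : ℕ} {l : List ℕ}

theorem evalX_insertX (j : ℕ) (l : List ℕ) : evalX (insertX j l) = xg j * evalX l := by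
  induction l generalizing j with
  | nil => simp [insertX]
  | cons i l ih =>
    unfold insertX
    split_ifs with h
    · rfl
    · rw [evalX_cons, ih, evalX_cons, ← mul_assoc, ← mul_assoc,
        ← xg_mul_xg_of_lt (show i < j by omega)]

theorem NvalFrom_insertX (a j : ℕ) (l : List ℕ) :
    NvalFrom a (insertX j l) = NvalFrom a (j :: l) := by
  induction l generalizing a j with
  | nil => rfl
  | cons i l ih =>
    unfold insertX
    split_ifs with h
    · rfl
    · rw [NvalFrom_cons, ih, NvalFrom_cons, NvalFrom_cons, NvalFrom_cons]
      congr 1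
      omega

theorem mem_insertX {y : ℕ} (hy : y ∈ insertX j l) : y ∈ l ∨ j ≤ y := by
  induction l generalizing j with
  | nil => simp_all [insertX]
  | cons i l ih =>
    unfold insertX at hy
    split_ifs at hy with h
    · rcases List.mem_cons.mp hy with rfl | hy
      · exact .inr le_rfl
      · exact .inl hy
    · rcases List.mem_cons.mp hy with rfl | hy
      · exact .inl List.mem_cons_self
      · rcases ih hy with hy | hy
        · exact .inl (List.mem_cons_of_mem _ hy)
        · exact .inr (by omega)

theorem pairwise_insertX (ht : l.Pairwise (· ≤ ·)) : (insertX j l).Pairwise (· ≤ ·) := by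
  induction l generalizing j with
  | nil => simp [insertX]
  | cons i l ih =>
    rw [List.pairwise_cons] at ht
    unfold insertX
    split_ifs with h
    · refine List.pairwise_cons.mpr ⟨fun y hy => ?_, List.pairwise_cons.mpr ht⟩
      rcases List.mem_cons.mp hy with rfl | hy
      · exact h
      · exact h.trans (ht.1 y hy)
    · refine List.pairwise_cons.mpr ⟨fun y hy => ?_, ih ht.2⟩
      rcases mem_insertX hy with hy | hy
      · exact ht.1 y hy
      · omega

theorem evalX_sortX (l : List ℕ) : evalX (sortX l) = evalX l := by
  induction l with
  | nil => rfl
  | cons j l ih => rw [sortX, evalX_insertX, ih, evalX_cons]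

theorem NvalFrom_sortX (a : ℕ) (l : List ℕ) : NvalFrom a (sortX l) = NvalFrom a l := by
  induction l generalizing a with
  | nil => rfl
  | cons j l ih => rw [sortX, NvalFrom_insertX, NvalFrom_cons, ih, NvalFrom_cons]

theorem Nval_sortX (l : List ℕ) : Nval (sortX l) = Nval l :=
  NvalFrom_sortX 0 l

theorem pairwise_sortX (l : List ℕ) : (sortX l).Pairwise (· ≤ ·) := by
  induction l with
  | nil => exact List.Pairwise.nil
  | cons j l ih => exact pairwise_insertX ih

end Sorting

theorem of_mem_Hn {n : ℕ} {a : BVGen} (ha : a ∈ BnGen n) :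
    (PresentedGroup.of a : GBV) ∈ Hn (max n 2) := by
  rcases ha with ⟨i, hi, hin, rfl⟩ | ⟨hn, rfl⟩
  · exact sg_mem_Hn hi (hin.trans (le_max_left _ _))
  · rw [max_eq_left hn]
    obtain ⟨k, rfl⟩ := Nat.exists_eq_add_of_le' hn
    exact tg_mem_Hn k

theorem evalW_mem_Hn {n : ℕ} {w : List (BVGen × Bool)} (hw : ∀ p ∈ w, p.1 ∈ BnGen n) :
    evalW w ∈ Hn (max n 2) := by
  refine list_prod_mem fun g hg => ?_
  obtain ⟨p, hp, rfl⟩ := List.mem_map.mp hg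
  split_ifs
  · exact of_mem_Hn (hw p hp)
  · exact inv_mem (of_mem_Hn (hw p hp))

theorem exists_evalW_eq_of_mem_Hn {k : ℕ} {g : GBV} (hg : g ∈ Hn (k + 2)) :
    ∃ w : List (BVGen × Bool), (∀ p ∈ w, p.1 ∈ BnGen (k + 2)) ∧ evalW w = g := by
  have hgen : ∀ g ∈ {g | ∃ i, 1 ≤ i ∧ i + 2 ≤ k + 2 ∧ g = sg i} ∪ {tg (k + 2 - 1)},
      ∃ a ∈ BnGen (k + 2), g = PresentedGroup.of a := by
    rintro _ (⟨i, hi, hik, rfl⟩ | rfl)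
    · exact ⟨_, .inl ⟨i, hi, hik, rfl⟩, rfl⟩
    · exact ⟨_, .inr ⟨le_add_self, rfl⟩, rfl⟩
  induction hg using Subgroup.closure_induction'' with
  | mem g hg =>
    obtain ⟨a, ha, rfl⟩ := hgen g hg
    exact ⟨[(a, true)], by simpa using ha, by simp [evalW]⟩
  | inv_mem g hg =>
    obtain ⟨a, ha, rfl⟩ := hgen g hg
    exact ⟨[(a, false)], by simpa using ha, by simp [evalW]⟩
  | one => exact ⟨[], by simp, rfl⟩
  | mul g h _ _ hg hh =>
    obtain ⟨w₁, hw₁, rfl⟩ := hg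
    obtain ⟨w₂, hw₂, rfl⟩ := hh
    exact ⟨w₁ ++ w₂, fun p hp => (List.mem_append.mp hp).elim (hw₁ p) (hw₂ p),
      evalW_append w₁ w₂⟩

theorem exists_block_eval_eq {n : ℕ} {A B : List ℕ} {h : GBV} (hn : 2 ≤ n) (hA : Nval A < n)
    (hB : Nval B < n) (hh : h ∈ Hn n) : ∃ u : Block, u.eval = evalX A * h * (evalX B)⁻¹ := by
  obtain ⟨k, rfl⟩ := Nat.exists_eq_add_of_le' hn
  obtain ⟨w, hw, rfl⟩ := exists_evalW_eq_of_mem_Hn hh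
  refine ⟨⟨sortX A, w, sortX B, k + 2, (pairwise_sortX A).isChain, (pairwise_sortX B).isChain,
    hw, ?_⟩, ?_⟩
  · rw [Nval_sortX, Nval_sortX]
    omega
  · simp only [Block.eval, evalX_sortX]

theorem exists_block_eval_eq_mul_inv {n : ℕ} {g h : GBV} (hn : 2 ≤ n) (hg : g ∈ leftBlocks n)
    (hh : h ∈ leftBlocks n) : ∃ u : Block, u.eval = g * h⁻¹ := by
  obtain ⟨A, hA, a, ha, rfl⟩ := hg
  obtain ⟨B, hB, b, hb, rfl⟩ := hh
  obtain ⟨u, hu⟩ := exists_block_eval_eq hn hA hB (mul_mem ha (inv_mem hb))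
  exact ⟨u, by rw [hu]; group⟩

theorem Block.evalX_w1_mul_mem_leftBlocks (b : Block) :
    evalX b.w1 * evalW b.w2 ∈ leftBlocks (max b.n 2) :=
  ⟨b.w1, by have := b.hbound; omega, _, evalW_mem_Hn b.h2, rfl⟩

theorem Block.evalX_w3_mul_inv_mem_leftBlocks (b : Block) :
    evalX b.w3 * (evalW b.w2)⁻¹ ∈ leftBlocks (max b.n 2) :=
  ⟨b.w3, by have := b.hbound; omega, _, inv_mem (evalW_mem_Hn b.h2), rfl⟩

end GBV

/-- The product of two blocks is represented by a single block: the set of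
elements of `BV` represented by blocks is closed under multiplication. -/
theorem bv_two_blocks_to_one (w v : GBV.Block) :
    ∃ u : GBV.Block, u.eval = w.eval * v.eval := by
  open GBV in
  obtain ⟨P, Q, hPQ⟩ := exists_inv_evalX_mul_evalX w.w3 v.w1
  obtain ⟨m₁, hm₁, hL⟩ := exists_mul_evalX_mem_leftBlocks (le_max_right _ _)
    w.evalX_w1_mul_mem_leftBlocks P
  obtain ⟨m₂, hm₂, hR⟩ := exists_mul_evalX_mem_leftBlocks (le_max_right _ _)
    v.evalX_w3_mul_inv_mem_leftBlocks Q
  have hm₁' : 2 ≤ m₁ := (le_max_right _ _).trans hm₁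
  have hm₂' : 2 ≤ m₂ := (le_max_right _ _).trans hm₂
  obtain ⟨u, hu⟩ := exists_block_eval_eq_mul_inv (hm₁'.trans (le_max_left m₁ m₂))
    (leftBlocks_mono hm₁' (le_max_left _ _) hL) (leftBlocks_mono hm₂' (le_max_right _ _) hR)
  refine ⟨u, hu.trans ?_⟩
  rw [inv_mul_eq_iff_eq_mul] at hPQ
  simp only [Block.eval, hPQ]
  group
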